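/- Let m ≥ 2 and let {S_n}_{n=0}^{m-2} ⊆ B(H) be positive, invertible, pairwise commuting operators. If {S_n}_{n=m-1}^∞ and {S'_n}_{n=m-1}^∞ are two sequences of positive, pairwise commuting, invertible operators, each extending {S_n}_{n=0}^{m-2} to a uniformly bounded weight sequence whose associated unilateral operator valued weighted shift is an m-isometry (and such that in each case the full weight sequence consists of positive pairwise commuting operators), then S_n = S'_n for every n ≥ m-1. -/

import Mathlib

/-!
Compressing the `m`-isometry identity `∑ (-1)^p C(m,p) (Sh*)^p Sh^p = 0` to the `n`-th summand
of `ℓ²(H)` gives `∑ (-1)^p C(m,p) W_p* W_p = 0` with `W_p = S_{n+p-1} ⋯ S_n`, and for positive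
commuting weights `W_p* W_p = S_{n+p-1}² ⋯ S_n²`. The top term `p = m` is therefore determined by
the lower ones, and cancelling the invertible factor `S_{n+m-2}² ⋯ S_n²` expresses `S_{n+m-1}²`
through `S_n², …, S_{n+m-2}²`. Starting from the common initial weights, induction shows that the
two sequences have the same squares, and positive square roots are unique.
-/

open ContinuousLinearMap MeasureTheory

noncomputable section

variable {H : Type*} [NormedAddCommGroup H] [InnerProductSpace ℂ H] [CompleteSpace H]

/-- `T^{[k]} = (T*)^k T^k`. -/
def opBr (T : H →L[ℂ] H) (k : ℕ) : H →L[ℂ] H :=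
  ((ContinuousLinearMap.adjoint T) ^ k).comp (T ^ k)

/-- `T` is an `m`-isometry: `∑_{p=0}^m (-1)^p (m choose p) T^{[p]} = 0`. -/
def IsMIsometry (T : H →L[ℂ] H) (m : ℕ) : Prop :=
  ∑ p ∈ Finset.range (m + 1), ((-1 : ℂ) ^ p * (m.choose p : ℂ)) • opBr T p = 0

/-- `T` satisfies the `k`-kernel condition: `Ker T*` is invariant under `T^{[n]}`
for every `n ∈ {1, …, k}`. -/
def KernelCondition (T : H →L[ℂ] H) (k : ℕ) : Prop :=
  ∀ n, 1 ≤ n → n ≤ k →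
    ∀ x ∈ LinearMap.ker (ContinuousLinearMap.adjoint T).toLinearMap,
      opBr T n x ∈ LinearMap.ker (ContinuousLinearMap.adjoint T).toLinearMap

/-- `Sh` is the unilateral operator valued weighted shift on `ℓ²(K)` with weights `S n`, i.e.
`Sh e_n(f) = e_{n+1}(S_n f)`. -/
def IsWeightedShiftOf {K : Type*} [NormedAddCommGroup K] [InnerProductSpace ℂ K]
    (Sh : lp (fun _ : ℕ => K) 2 →L[ℂ] lp (fun _ : ℕ => K) 2) (S : ℕ → K →L[ℂ] K) : Prop :=
  ∀ (n : ℕ) (f : K), Sh (lp.single 2 n f) = lp.single 2 (n + 1) (S n f)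

open scoped InnerProduct

section WeightProd

variable {A : Type*} [Monoid A]

def weightProd (S : ℕ → A) (n : ℕ) : ℕ → A
  | 0 => 1
  | p + 1 => S (n + p) * weightProd S n p

variable {S T : ℕ → A} {n p : ℕ}

theorem weightProd_congr (h : ∀ i < p, S (n + i) = T (n + i)) :
    weightProd S n p = weightProd T n p := by
  induction p with
  | zero => rfl
  | succ p ih =>
    exact congrArg₂ (· * ·) (h p p.lt_succ_self) (ih fun i hi => h i (by omega))

theorem isUnit_weightProd (hS : ∀ k, IsUnit (S k)) (n p : ℕ) : IsUnit (weightProd S n p) := by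
  induction p with
  | zero => exact isUnit_one
  | succ p ih => exact (hS (n + p)).mul ih

theorem commute_weightProd (hS : ∀ i j, Commute (S i) (S j)) (k n p : ℕ) :
    Commute (S k) (weightProd S n p) := by
  induction p with
  | zero => exact Commute.one_right _
  | succ p ih => exact (hS k (n + p)).mul_right ih

theorem weightProd_mul_self (hS : ∀ i j, Commute (S i) (S j)) (n p : ℕ) :
    weightProd S n p * weightProd S n p = weightProd (fun k => S k * S k) n p := by
  induction p with
  | zero => exact one_mul 1
  | succ p ih =>
    rw [weightProd, weightProd, ← ih]
    exact (commute_weightProd hS (n + p) n p).symm.mul_mul_mul_comm _ _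

theorem star_weightProd_mul_self [StarMul A] (hsa : ∀ k, IsSelfAdjoint (S k))
    (hS : ∀ i j, Commute (S i) (S j)) (n p : ℕ) :
    star (weightProd S n p) * weightProd S n p = weightProd (fun k => S k * S k) n p := by
  suffices IsSelfAdjoint (weightProd S n p) by rw [this.star_eq, weightProd_mul_self hS]
  induction p with
  | zero => exact .one A
  | succ p ih => exact ((hsa (n + p)).commute_iff ih).1 (commute_weightProd hS _ n p)

end WeightProd

theorem eq_of_sum_smul_weightProd_eq_zero {R A : Type*} [Monoid R] [Ring A]
    [DistribMulAction R A] {c : ℕ → R} {m : ℕ} (hc : IsUnit (c m)) {T T' : ℕ → A}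
    (hT : ∀ n, ∑ p ∈ Finset.range (m + 1), c p • weightProd T n p = 0)
    (hT' : ∀ n, ∑ p ∈ Finset.range (m + 1), c p • weightProd T' n p = 0)
    (hagree : ∀ n, n ≤ m - 2 → T n = T' n) (hunit' : ∀ n, IsUnit (T' n)) (n : ℕ) :
    T n = T' n := by
  rcases m with _ | m
  · have h10 : (1 : A) = 0 := hc.smul_eq_zero.1 (by simpa [weightProd] using hT 0)
    exact eq_of_zero_eq_one h10.symm _ _
  induction n using Nat.strong_induction_on with
  | _ n ih =>
  by_cases hn : n ≤ m + 1 - 2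
  · exact hagree n hn
  obtain ⟨k, rfl⟩ : ∃ k, n = k + m := ⟨n - m, by omega⟩
  have hlow : ∀ p ≤ m, weightProd T k p = weightProd T' k p := fun p hp =>
    weightProd_congr fun i hi => ih (k + i) (by omega)
  have htop : weightProd T k (m + 1) = weightProd T' k (m + 1) := by
    have h := (hT k).trans (hT' k).symm
    rw [Finset.sum_range_succ _ (m + 1), Finset.sum_range_succ _ (m + 1), Finset.sum_congr rfl
      fun p hp => by rw [hlow p (Finset.mem_range_succ_iff.1 hp)]] at h
    exact hc.smul_left_cancel.1 (add_left_cancel h)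
  rw [weightProd, weightProd, hlow m le_rfl] at htop
  exact (isUnit_weightProd hunit' k m).mul_right_cancel htop

theorem lp.adjoint_singleContinuousLinearMap_comp_self {𝕜 ι : Type*} [RCLike 𝕜] [DecidableEq ι]
    {G : ι → Type*} [∀ i, NormedAddCommGroup (G i)] [∀ i, InnerProductSpace 𝕜 (G i)]
    [∀ i, CompleteSpace (G i)] (i : ι) :
    (lp.singleContinuousLinearMap 𝕜 G 2 i)† ∘L lp.singleContinuousLinearMap 𝕜 G 2 i = 1 := by
  ext f
  refine ext_inner_left 𝕜 fun g => ?_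
  rw [comp_apply, adjoint_inner_right, lp.singleContinuousLinearMap_apply,
    lp.singleContinuousLinearMap_apply, lp.inner_single_left, lp.single_apply_self,
    one_apply_eq_self]

theorem IsWeightedShiftOf.pow_comp_single {K : Type*} [NormedAddCommGroup K]
    [InnerProductSpace ℂ K] {Sh : lp (fun _ : ℕ => K) 2 →L[ℂ] lp (fun _ : ℕ => K) 2}
    {S : ℕ → K →L[ℂ] K} (hSh : IsWeightedShiftOf Sh S) (n p : ℕ) :
    (Sh ^ p) ∘L lp.singleContinuousLinearMap ℂ _ 2 n
      = lp.singleContinuousLinearMap ℂ (fun _ : ℕ => K) 2 (n + p) ∘L weightProd S n p := by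
  induction p with
  | zero => ext; simp [weightProd]
  | succ p ih =>
    rw [pow_succ', mul_def, comp_assoc, ih]
    ext1 f
    exact hSh (n + p) (weightProd S n p f)

section WeightedShift

variable {Sh : lp (fun _ : ℕ => H) 2 →L[ℂ] lp (fun _ : ℕ => H) 2} {S : ℕ → H →L[ℂ] H}

theorem IsWeightedShiftOf.adjoint_single_comp_opBr_comp_single (hSh : IsWeightedShiftOf Sh S)
    (n p : ℕ) :
    (lp.singleContinuousLinearMap ℂ _ 2 n)† ∘L opBr Sh p ∘L lp.singleContinuousLinearMap ℂ _ 2 n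
      = (weightProd S n p)† ∘L weightProd S n p := by
  have hpow : (Sh†) ^ p = (Sh ^ p)† := by simp only [← star_eq_adjoint, star_pow]
  rw [opBr, hpow, ← comp_assoc, ← comp_assoc, ← adjoint_comp, comp_assoc, hSh.pow_comp_single,
    adjoint_comp, comp_assoc, ← comp_assoc _ _ (weightProd S n p),
    lp.adjoint_singleContinuousLinearMap_comp_self (G := fun _ : ℕ => H)]
  exact congrArg _ (one_mul _)

theorem IsMIsometry.sum_smul_adjoint_weightProd_comp_eq_zero {m : ℕ} (hiso : IsMIsometry Sh m)
    (hSh : IsWeightedShiftOf Sh S) (n : ℕ) :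
    ∑ p ∈ Finset.range (m + 1),
      ((-1 : ℂ) ^ p * (m.choose p : ℂ)) • ((weightProd S n p)† ∘L weightProd S n p) = 0 := by
  have := congrArg (fun T => (lp.singleContinuousLinearMap ℂ _ 2 n)† ∘L T ∘L
    lp.singleContinuousLinearMap ℂ (fun _ : ℕ => H) 2 n) hiso
  simpa only [finsetSum_comp, comp_finsetSum, smul_comp, comp_smul, zero_comp, comp_zero,
    hSh.adjoint_single_comp_opBr_comp_single] using this

theorem IsMIsometry.sum_smul_weightProd_mul_self_eq_zero {m : ℕ} (hiso : IsMIsometry Sh m)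
    (hSh : IsWeightedShiftOf Sh S) (hsa : ∀ k, IsSelfAdjoint (S k))
    (hS : ∀ i j, Commute (S i) (S j)) (n : ℕ) :
    ∑ p ∈ Finset.range (m + 1),
      ((-1 : ℂ) ^ p * (m.choose p : ℂ)) • weightProd (fun k => S k * S k) n p = 0 := by
  simpa only [← star_eq_adjoint, ← mul_def, star_weightProd_mul_self hsa hS]
    using hiso.sum_smul_adjoint_weightProd_comp_eq_zero hSh n

end WeightedShift

theorem mIsometric_completion_unique_general (m : ℕ) (S S' : ℕ → H →L[ℂ] H)
    (hagree : ∀ n, n ≤ m - 2 → S n = S' n)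
    (hpos : ∀ n, (S n).IsPositive) (hpos' : ∀ n, (S' n).IsPositive)
    (hinv' : ∀ n, IsUnit (S' n))
    (hcomm : ∀ i j, (S i).comp (S j) = (S j).comp (S i))
    (hcomm' : ∀ i j, (S' i).comp (S' j) = (S' j).comp (S' i))
    (Sh Sh' : lp (fun _ : ℕ => H) 2 →L[ℂ] lp (fun _ : ℕ => H) 2)
    (hSh : IsWeightedShiftOf Sh S) (hSh' : IsWeightedShiftOf Sh' S')
    (hiso : IsMIsometry Sh m) (hiso' : IsMIsometry Sh' m) :
    ∀ n, S n = S' n := by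
  intro n
  have hsq : S n * S n = S' n * S' n :=
    eq_of_sum_smul_weightProd_eq_zero (isUnit_iff_ne_zero.2 (by simp))
      (hiso.sum_smul_weightProd_mul_self_eq_zero hSh (fun k => (hpos k).isSelfAdjoint) hcomm)
      (hiso'.sum_smul_weightProd_mul_self_eq_zero hSh' (fun k => (hpos' k).isSelfAdjoint) hcomm')
      (fun k hk => by rw [hagree k hk]) (fun k => (hinv' k).mul (hinv' k)) n
  exact (CFC.mul_self_eq_mul_self_iff _ _ ((nonneg_iff_isPositive _).2 (hpos n))
    ((nonneg_iff_isPositive _).2 (hpos' n))).1 hsq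

/-- Proposition 3.6. For `m ≥ 2`, the solution to the `m`-isometric
completion problem for positive, invertible, pairwise commuting initial weights
`{S_n}_{n=0}^{m-2}` is unique in the class of unilateral operator valued weighted shifts with
positive pairwise commuting weights. -/
theorem mIsometric_completion_unique (m : ℕ) (hm : 2 ≤ m) (S S' : ℕ → H →L[ℂ] H)
    (hagree : ∀ n, n ≤ m - 2 → S n = S' n)
    (hpos : ∀ n, (S n).IsPositive) (hpos' : ∀ n, (S' n).IsPositive)
    (hinv : ∀ n, IsUnit (S n)) (hinv' : ∀ n, IsUnit (S' n))
    (hcomm : ∀ i j, (S i).comp (S j) = (S j).comp (S i))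
    (hcomm' : ∀ i j, (S' i).comp (S' j) = (S' j).comp (S' i))
    (hbdd : ∃ M : ℝ, ∀ n, ‖S n‖ ≤ M) (hbdd' : ∃ M : ℝ, ∀ n, ‖S' n‖ ≤ M)
    (Sh Sh' : lp (fun _ : ℕ => H) 2 →L[ℂ] lp (fun _ : ℕ => H) 2)
    (hSh : IsWeightedShiftOf Sh S) (hSh' : IsWeightedShiftOf Sh' S')
    (hiso : IsMIsometry Sh m) (hiso' : IsMIsometry Sh' m) :
    ∀ n, S n = S' n :=
  mIsometric_completion_unique_general m S S' hagree hpos hpos' hinv' hcomm hcomm' Sh Sh' hSh hSh'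
    hiso hiso'
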